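/- arXiv:0805.1459 — 4 statements merged into one kernel-verified Lean document; each statement's English description precedes it below -/
import Mathlib

section
/- Let 𝒜 be an abelian category admitting countable products (for instance the category of abelian groups). Let X be a cochain complex in 𝒜 and let D : X → X be a chain map of degree −2 (maps D : X^m → X^{m−2} commuting with the differentials). Let P be the cochain complex with P^n = ∏_{i∈ℕ} X^{n+2i} and componentwise differential, let D̂ : P → P be the degree-0 chain map with D̂(x)_i = D(x_{i+1}), and let Y be the cochain complex with Y^n = P^n ⊕ P^{n+1} and differential δ(a,b) = (d a + (1 − D̂)(b), −d b). Then the degree-0 chain endomorphism I of Y defined by I(a,b) = (D̂ a, D̂ b) is chain homotopic to the identity of Y; explicitly, with the homotopy J : Y^n → Y^{n−1}, J(a,b) = (0, a), one has id_Y − I = δ ∘ J + J ∘ δ. -/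
open CategoryTheory CategoryTheory.Limits

universe v u

variable {A : Type u} [Category.{v} A] [Abelian A] [HasCountableProducts A]

/-- The object `P^n = ∏_{i∈ℕ} X^{n+2i}`. -/
noncomputable def Pobj (X : CochainComplex A ℤ) (n : ℤ) : A :=
  ∏ᶜ fun i : ℕ => X.X (n + 2 * (i : ℤ))

/-- The (total) componentwise differential of the complex `P`. -/
noncomputable def dP (X : CochainComplex A ℤ) (n m : ℤ) : Pobj X n ⟶ Pobj X m :=
  Pi.lift fun i : ℕ => Pi.π _ i ≫ X.d (n + 2 * (i : ℤ)) (m + 2 * (i : ℤ))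

/-- The map `D̂ : P^n ⟶ P^n`, `D̂(x)_i = D(x_{i+1})`, induced by a total family
`D n m : X^n ⟶ X^m` (supported in degree `m = n - 2`). -/
noncomputable def Dhat (X : CochainComplex A ℤ) (D : ∀ n m : ℤ, X.X n ⟶ X.X m) (n : ℤ) :
    Pobj X n ⟶ Pobj X n :=
  Pi.lift fun i : ℕ =>
    Pi.π (fun j : ℕ => X.X (n + 2 * (j : ℤ))) (i + 1) ≫
      D (n + 2 * ((i + 1 : ℕ) : ℤ)) (n + 2 * (i : ℤ))

/-- The object `Y^n = P^n ⊕ P^{n+1}`. -/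
noncomputable def Yobj (X : CochainComplex A ℤ) (n : ℤ) : A :=
  Pobj X n ⊞ Pobj X (n + 1)

/-- The (total) differential `δ(a,b) = (d a + (1 - D̂) b, -d b)` of the complex `Y`. -/
noncomputable def deltaY (X : CochainComplex A ℤ) (D : ∀ n m : ℤ, X.X n ⟶ X.X m) (n m : ℤ) :
    Yobj X n ⟶ Yobj X m :=
  if h : n + 1 = m then
    (biprod.lift
        (biprod.fst ≫ dP X n (n + 1) + biprod.snd ≫ (𝟙 (Pobj X (n + 1)) - Dhat X D (n + 1)))
        (biprod.snd ≫ (-dP X (n + 1) (n + 1 + 1))) :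
      Yobj X n ⟶ Yobj X (n + 1)) ≫ eqToHom (congrArg (Yobj X) h)
  else 0

/-- The (total) homotopy `J(a,b) = (0,a)`, of degree `-1`. -/
noncomputable def Jmap (X : CochainComplex A ℤ) (n m : ℤ) : Yobj X n ⟶ Yobj X m :=
  if h : n - 1 = m then
    (biprod.lift (0 : Yobj X n ⟶ Pobj X (n - 1))
        (biprod.fst ≫ eqToHom (congrArg (Pobj X) (by ring : n = n - 1 + 1))) :
      Yobj X n ⟶ Yobj X (n - 1)) ≫ eqToHom (congrArg (Yobj X) h)
  else 0

/-- The endomorphism `I(a,b) = (D̂ a, D̂ b)` of `Y^n`. -/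
noncomputable def Imap (X : CochainComplex A ℤ) (D : ∀ n m : ℤ, X.X n ⟶ X.X m) (n : ℤ) :
    Yobj X n ⟶ Yobj X n :=
  biprod.map (Dhat X D n) (Dhat X D (n + 1))

/-! On components, `J(a,b) = (0,a)` gives `δ(J(a,b)) = ((1 - D̂) a, -d a)` and
`J(δ(a,b)) = (0, d a + (1 - D̂) b)`, whose sum is `((1 - D̂) a, (1 - D̂) b) = (id - I)(a,b)`.
Beyond this computation on biproduct projections, the only work is transporting along
`Pobj X (n - 1 + 1) = Pobj X n`. -/

-- `biprod.fst` out of `Yobj X n` only typechecks after unfolding `Yobj`, which `simp` will not do.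
noncomputable def Yobj.fst (X : CochainComplex A ℤ) (n : ℤ) : Yobj X n ⟶ Pobj X n :=
  biprod.fst

noncomputable def Yobj.snd (X : CochainComplex A ℤ) (n : ℤ) : Yobj X n ⟶ Pobj X (n + 1) :=
  biprod.snd

section Components

variable {X : CochainComplex A ℤ} {n m : ℤ}

@[simp]
lemma eqToHom_comp_dP {n' : ℤ} (h : n = n') :
    eqToHom (congrArg (Pobj X) h) ≫ dP X n' m = dP X n m := by
  subst h; simp

lemma Yobj.hom_ext {Z : A} {f g : Z ⟶ Yobj X n}
    (h₀ : f ≫ Yobj.fst X n = g ≫ Yobj.fst X n) (h₁ : f ≫ Yobj.snd X n = g ≫ Yobj.snd X n) :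
    f = g :=
  biprod.hom_ext _ _ h₀ h₁

@[simp]
lemma Imap_fst (D : ∀ n m : ℤ, X.X n ⟶ X.X m) :
    Imap X D n ≫ Yobj.fst X n = Yobj.fst X n ≫ Dhat X D n :=
  biprod.map_fst _ _

@[simp]
lemma Imap_snd (D : ∀ n m : ℤ, X.X n ⟶ X.X m) :
    Imap X D n ≫ Yobj.snd X n = Yobj.snd X n ≫ Dhat X D (n + 1) :=
  biprod.map_snd _ _

@[simp]
lemma deltaY_fst (D : ∀ n m : ℤ, X.X n ⟶ X.X m) (h : n + 1 = m) :
    deltaY X D n m ≫ Yobj.fst X m =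
      Yobj.fst X n ≫ dP X n m +
        Yobj.snd X n ≫ (𝟙 _ - Dhat X D (n + 1)) ≫ eqToHom (congrArg (Pobj X) h) := by
  subst h
  simp only [Yobj, deltaY, ↓reduceDIte, Preadditive.comp_sub, Category.comp_id, Preadditive.comp_neg,
    eqToHom_naturality, eqToHom_refl, Category.id_comp, Yobj.fst, biprod.lift_fst, Yobj.snd]
  rfl

@[simp]
lemma deltaY_snd (D : ∀ n m : ℤ, X.X n ⟶ X.X m) (h : n + 1 = m) :
    deltaY X D n m ≫ Yobj.snd X m = -(Yobj.snd X n ≫ dP X (n + 1) (m + 1)) := by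
  subst h
  simp only [Yobj, deltaY, ↓reduceDIte, Preadditive.comp_sub, Category.comp_id, Preadditive.comp_neg,
    eqToHom_naturality, eqToHom_refl, Category.id_comp, Yobj.snd, biprod.lift_snd]
  rfl

@[simp]
lemma Jmap_fst (h : n - 1 = m) : Jmap X n m ≫ Yobj.fst X m = 0 := by
  subst h
  simp only [Yobj, Jmap, ↓reduceDIte, eqToHom_naturality, eqToHom_refl, Category.id_comp, Yobj.fst]
  exact biprod.lift_fst (X := Pobj X (n - 1)) (Y := Pobj X (n - 1 + 1)) _ _

@[simp]
lemma Jmap_snd (h : n - 1 = m) :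
    Jmap X n m ≫ Yobj.snd X m =
      Yobj.fst X n ≫ eqToHom (congrArg (Pobj X) (by rw [← h]; ring)) := by
  subst h
  simp only [Yobj, Jmap, ↓reduceDIte, eqToHom_naturality, eqToHom_refl, Category.id_comp, Yobj.snd,
    Yobj.fst]
  exact biprod.lift_snd (X := Pobj X (n - 1)) (Y := Pobj X (n - 1 + 1)) _ _

@[simp]
lemma Jmap_fst_assoc {W : A} (h : n - 1 = m) (k : Pobj X m ⟶ W) :
    Jmap X n m ≫ Yobj.fst X m ≫ k = 0 := by
  rw [← Category.assoc, Jmap_fst h, zero_comp]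

@[simp]
lemma Jmap_snd_assoc {W : A} (h : n - 1 = m) (k : Pobj X (m + 1) ⟶ W) :
    Jmap X n m ≫ Yobj.snd X m ≫ k =
      Yobj.fst X n ≫ eqToHom (congrArg (Pobj X) (by rw [← h]; ring)) ≫ k := by
  rw [← Category.assoc, Jmap_snd h, Category.assoc]

end Components

theorem homotopy_id_sub_I_general (X : CochainComplex A ℤ)
    (D : ∀ n m : ℤ, X.X n ⟶ X.X m) :
    ∀ n : ℤ,
      𝟙 (Yobj X n) - Imap X D n =
        Jmap X n (n - 1) ≫ deltaY X D (n - 1) n + deltaY X D n (n + 1) ≫ Jmap X (n + 1) n := by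
  intro n
  apply Yobj.hom_ext <;> simp

/-- Let `X` be a cochain complex in an abelian category with countable
products and let `D` be a chain map of degree `-2` on `X`.  Then the endomorphism
`I(a,b) = (D̂ a, D̂ b)` of the complex `Y` (the shifted mapping cone of `1 - D̂`, i.e. the
homotopy limit of the tower `X ← X[2] ← X[4] ← ⋯`) is chain homotopic to the identity via
the homotopy `J(a,b) = (0,a)`:  `id - I = δ ∘ J + J ∘ δ`. -/
theorem homotopy_id_sub_I (X : CochainComplex A ℤ)
    (D : ∀ n m : ℤ, X.X n ⟶ X.X m)
    (hD0 : ∀ n m : ℤ, m ≠ n - 2 → D n m = 0)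
    (hDcomm : ∀ n : ℤ, D n (n - 2) ≫ X.d (n - 2) (n - 1) = X.d n (n + 1) ≫ D (n + 1) (n - 1)) :
    ∀ n : ℤ,
      𝟙 (Yobj X n) - Imap X D n =
        Jmap X n (n - 1) ≫ deltaY X D (n - 1) n + deltaY X D n (n + 1) ≫ Jmap X (n + 1) n :=
  homotopy_id_sub_I_general X D
end

section
/- Let 𝒜 be an abelian category admitting countable products (for instance the category of abelian groups). Let X be a cochain complex in 𝒜 and let D : X → X be a chain map of degree −2. With P^n = ∏_{i∈ℕ} X^{n+2i}, D̂(x)_i = D(x_{i+1}), and Y the complex with Y^n = P^n ⊕ P^{n+1} and differential δ(a,b) = (d a + (1 − D̂)(b), −d b), define the chain maps W : Y → Y of degree −2 by W(a,b) = ((D(a_i))_{i∈ℕ}, (D(b_i))_{i∈ℕ}) and S : Y → Y of degree +2 by S(a,b) = ((a_{i+1})_{i∈ℕ}, (b_{i+1})_{i∈ℕ}). Then W ∘ S = S ∘ W = I, where I(a,b) = (D̂ a, D̂ b), both composites are chain homotopic to the identity of Y, and hence W is a chain homotopy equivalence of degree −2; in particular, for every n ∈ ℤ the induced map H^n(Y)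 → H^{n−2}(Y) on cohomology is an isomorphism. -/
open CategoryTheory CategoryTheory.Limits

universe v u

variable {A : Type u} [Category.{v} A] [Abelian A] [HasCountableProducts A]

/-- The (total) componentwise map `∏ D : P^n ⟶ P^m`. -/
noncomputable def PD (X : CochainComplex A ℤ) (D : ∀ n m : ℤ, X.X n ⟶ X.X m) (n m : ℤ) :
    Pobj X n ⟶ Pobj X m :=
  Pi.lift fun i : ℕ => Pi.π _ i ≫ D (n + 2 * (i : ℤ)) (m + 2 * (i : ℤ))

/-- The (total) shift `E : P^n ⟶ P^{n+2}`, `E(x)_i = x_{i+1}`. -/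
noncomputable def PS (X : CochainComplex A ℤ) (n m : ℤ) : Pobj X n ⟶ Pobj X m :=
  if h : n + 2 = m then
    Pi.lift fun i : ℕ =>
      Pi.π (fun j : ℕ => X.X (n + 2 * (j : ℤ))) (i + 1) ≫
        eqToHom (congrArg X.X
          (by rw [← h]; push_cast; ring : n + 2 * ((i + 1 : ℕ) : ℤ) = m + 2 * (i : ℤ)))
  else 0

/-- The (total) degree `-2` chain map `W = (∏D, ∏D) : Y^n ⟶ Y^{n-2}`. -/
noncomputable def Wmap (X : CochainComplex A ℤ) (D : ∀ n m : ℤ, X.X n ⟶ X.X m) (n m : ℤ) :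
    Yobj X n ⟶ Yobj X m :=
  biprod.map (PD X D n m) (PD X D (n + 1) (m + 1))

/-- The (total) degree `+2` shift map `S = (E, E) : Y^n ⟶ Y^{n+2}`. -/
noncomputable def Smap (X : CochainComplex A ℤ) (n m : ℤ) : Yobj X n ⟶ Yobj X m :=
  biprod.map (PS X n m) (PS X (n + 1) (m + 1))

/-- The complex `Y` (the shifted mapping cone of `1 - D̂`). -/
noncomputable def Ycomplex (X : CochainComplex A ℤ) (D : ∀ n m : ℤ, X.X n ⟶ X.X m)
    (s1 : ∀ n m : ℤ, ¬(ComplexShape.up ℤ).Rel n m → deltaY X D n m = 0)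
    (s2 : ∀ n m k : ℤ, (ComplexShape.up ℤ).Rel n m → (ComplexShape.up ℤ).Rel m k →
      deltaY X D n m ≫ deltaY X D m k = 0) :
    CochainComplex A ℤ :=
  ⟨fun n => Yobj X n, fun n m => deltaY X D n m, s1, s2⟩

/-- The complex `Y` shifted by `-2`, with `n`-th term `Y^{n-2}`. -/
noncomputable def YcomplexShift (X : CochainComplex A ℤ) (D : ∀ n m : ℤ, X.X n ⟶ X.X m)
    (t1 : ∀ n m : ℤ, ¬(ComplexShape.up ℤ).Rel n m → deltaY X D (n - 2) (m - 2) = 0)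
    (t2 : ∀ n m k : ℤ, (ComplexShape.up ℤ).Rel n m → (ComplexShape.up ℤ).Rel m k →
      deltaY X D (n - 2) (m - 2) ≫ deltaY X D (m - 2) (k - 2) = 0) :
    CochainComplex A ℤ :=
  ⟨fun n => Yobj X (n - 2), fun n m => deltaY X D (n - 2) (m - 2), t1, t2⟩

/-! Both composites `W ∘ S` and `S ∘ W` are `I = (D̂, D̂)`, by mere reindexing of the products.
Since `Y` is the cone of `1 - D̂`, the map `h(a, b) = (0, a)` of degree `-1` satisfies
`h δ + δ h = 1 - I`: it picks out the off-diagonal entry `1 - D̂` of `δ`. So `S` is a homotopy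
inverse of `W`, and `W` induces isomorphisms on cohomology. -/

section Reindexing

variable {C : Type*} [Category C] {ι : Type*} {F G : ι → C}

lemma eqToHom_comp_family (f : ∀ a b, F a ⟶ G b) {a b c : ι} (h : a = b) (p : F a = F b) :
    eqToHom p ≫ f b c = f a c := by
  subst h; simp

lemma family_comp_eqToHom (f : ∀ a b, F a ⟶ G b) {a b c : ι} (h : b = c) (p : G b = G c) :
    f a b ≫ eqToHom p = f a c := by
  subst h; simp

end Reindexing

namespace CochainComplex

variable {C : Type*} [Category C] [Preadditive C] {K L : CochainComplex C ℤ}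

def homotopyOfFamily {f g : K ⟶ L} (h : ∀ i j, K.X i ⟶ L.X j)
    (hzero : ∀ i j, j + 1 ≠ i → h i j = 0)
    (hcomm : ∀ n, f.f n - g.f n = h n (n - 1) ≫ L.d (n - 1) n + K.d n (n + 1) ≫ h (n + 1) n) :
    Homotopy f g where
  hom := h
  zero i j hij := hzero i j hij
  comm n := by
    rw [dNext_eq h (show (ComplexShape.up ℤ).Rel n (n + 1) from rfl),
      prevD_eq h (show (ComplexShape.up ℤ).Rel (n - 1) n from sub_add_cancel n 1),
      ← sub_eq_iff_eq_add, hcomm, add_comm]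

end CochainComplex

section Periodicity

variable (X : CochainComplex A ℤ) (D : ∀ n m : ℤ, X.X n ⟶ X.X m)

lemma PS_comp_PD {a b : ℤ} (h : a + 2 = b) : PS X a b ≫ PD X D b a = Dhat X D a := by
  subst h
  unfold PS PD Dhat Pobj
  rw [dif_pos rfl]
  ext i
  simp only [Category.assoc, limit.lift_π, Fan.mk_π_app, limit.lift_π_assoc]
  rw [eqToHom_comp_family D (by push_cast; ring)]

lemma PD_comp_PS {a b : ℤ} (h : a + 2 = b) : PD X D b a ≫ PS X a b = Dhat X D b := by
  subst h
  unfold PS PD Dhat Pobj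
  rw [dif_pos rfl]
  ext i
  simp only [Category.assoc, limit.lift_π, Fan.mk_π_app, limit.lift_π_assoc]
  rw [family_comp_eqToHom D (by push_cast; ring)]

lemma Smap_comp_Wmap {a b : ℤ} (h : a + 2 = b) : Smap X a b ≫ Wmap X D b a = Imap X D a := by
  unfold Smap Wmap Imap Yobj
  apply biprod.hom_ext <;> simp [PS_comp_PD X D h, PS_comp_PD X D (show a + 1 + 2 = b + 1 by omega)]

lemma Wmap_comp_Smap {a b : ℤ} (h : a + 2 = b) : Wmap X D b a ≫ Smap X a b = Imap X D b := by
  unfold Smap Wmap Imap Yobj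
  apply biprod.hom_ext <;> simp [PD_comp_PS X D h, PD_comp_PS X D (show a + 1 + 2 = b + 1 by omega)]

lemma PS_comp_dP {a a' b b' : ℤ} (ha : a + 2 = a') (hb : b + 2 = b') :
    PS X a a' ≫ dP X a' b' = dP X a b ≫ PS X b b' := by
  subst ha hb
  unfold PS dP Pobj
  rw [dif_pos rfl, dif_pos rfl]
  ext i
  simp only [Category.assoc, limit.lift_π, Fan.mk_π_app, limit.lift_π_assoc]
  rw [eqToHom_comp_family X.d (by push_cast; ring), family_comp_eqToHom X.d (by push_cast; ring)]

lemma PS_comp_Dhat {a a' : ℤ} (ha : a + 2 = a') :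
    PS X a a' ≫ Dhat X D a' = Dhat X D a ≫ PS X a a' := by
  subst ha
  unfold PS Dhat Pobj
  rw [dif_pos rfl]
  ext i
  simp only [Category.assoc, limit.lift_π, Fan.mk_π_app, limit.lift_π_assoc]
  rw [eqToHom_comp_family D (by push_cast; ring), family_comp_eqToHom D (by push_cast; ring)]

lemma Smap_comp_deltaY {a b a' b' : ℤ} (hab : a + 1 = b) (ha : a + 2 = a') (hb : b + 2 = b') :
    Smap X a a' ≫ deltaY X D a' b' = deltaY X D a b ≫ Smap X b b' := by
  subst hab ha
  obtain rfl : b' = a + 2 + 1 := by omega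
  unfold Smap deltaY Yobj
  rw [dif_pos rfl, dif_pos rfl]
  apply biprod.hom_ext
  · simp [PS_comp_dP X rfl (add_right_comm a 1 2), PS_comp_Dhat X D (add_right_comm a 1 2)]
  · simp [PS_comp_dP X (add_right_comm a 1 2) (by omega : a + 1 + 1 + 2 = a + 2 + 1 + 1)]

noncomputable def Hmap (p q : ℤ) : Yobj X p ⟶ Yobj X q :=
  if h : q + 1 = p then biprod.lift 0 (biprod.fst ≫ eqToHom (congrArg (Pobj X) h.symm))
  else 0

lemma Hmap_eq_zero {p q : ℤ} (h : q + 1 ≠ p) : Hmap X p q = 0 := dif_neg h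

lemma id_sub_Imap_eq {m n k : ℤ} (hm : m + 1 = n) (hk : n + 1 = k) :
    𝟙 (Yobj X n) - Imap X D n = Hmap X n m ≫ deltaY X D m n + deltaY X D n k ≫ Hmap X k n := by
  subst hm hk
  unfold Hmap deltaY Imap Yobj
  rw [dif_pos rfl, dif_pos rfl, dif_pos rfl, dif_pos rfl]
  apply biprod.hom_ext <;> simp

end Periodicity

theorem W_comp_S_eq_I_and_homotopy_equiv_general (X : CochainComplex A ℤ)
    (D : ∀ n m : ℤ, X.X n ⟶ X.X m) :
    (∀ n : ℤ, Smap X n (n + 2) ≫ Wmap X D (n + 2) n = Imap X D n) ∧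
    (∀ n : ℤ, Wmap X D n (n - 2) ≫ Smap X (n - 2) n = Imap X D n) ∧
    (∃ h : ∀ p q : ℤ, Yobj X p ⟶ Yobj X q, ∀ n : ℤ,
      𝟙 (Yobj X n) - Smap X n (n + 2) ≫ Wmap X D (n + 2) n =
        h n (n - 1) ≫ deltaY X D (n - 1) n + deltaY X D n (n + 1) ≫ h (n + 1) n) ∧
    (∃ h : ∀ p q : ℤ, Yobj X p ⟶ Yobj X q, ∀ n : ℤ,
      𝟙 (Yobj X n) - Wmap X D n (n - 2) ≫ Smap X (n - 2) n =
        h n (n - 1) ≫ deltaY X D (n - 1) n + deltaY X D n (n + 1) ≫ h (n + 1) n) ∧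
    (∀ (s1 : ∀ n m : ℤ, ¬(ComplexShape.up ℤ).Rel n m → deltaY X D n m = 0)
      (s2 : ∀ n m k : ℤ, (ComplexShape.up ℤ).Rel n m → (ComplexShape.up ℤ).Rel m k →
        deltaY X D n m ≫ deltaY X D m k = 0)
      (t1 : ∀ n m : ℤ, ¬(ComplexShape.up ℤ).Rel n m → deltaY X D (n - 2) (m - 2) = 0)
      (t2 : ∀ n m k : ℤ, (ComplexShape.up ℤ).Rel n m → (ComplexShape.up ℤ).Rel m k →
        deltaY X D (n - 2) (m - 2) ≫ deltaY X D (m - 2) (k - 2) = 0)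
      (hcomm : ∀ n m : ℤ, (ComplexShape.up ℤ).Rel n m →
        Wmap X D n (n - 2) ≫ deltaY X D (n - 2) (m - 2) = deltaY X D n m ≫ Wmap X D m (m - 2))
      (n : ℤ),
      IsIso (HomologicalComplex.homologyMap
        (HomologicalComplex.Hom.mk (fun p => Wmap X D p (p - 2)) hcomm :
          Ycomplex X D s1 s2 ⟶ YcomplexShift X D t1 t2) n)) := by
  refine ⟨fun n => Smap_comp_Wmap X D rfl, fun n => Wmap_comp_Smap X D (by omega),
    ⟨Hmap X, fun n => ?_⟩, ⟨Hmap X, fun n => ?_⟩, fun s1 s2 t1 t2 hcomm n => ?_⟩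
  · rw [Smap_comp_Wmap X D rfl]
    exact id_sub_Imap_eq X D (by omega) rfl
  · rw [Wmap_comp_Smap X D (by omega)]
    exact id_sub_Imap_eq X D (by omega) rfl
  let W : Ycomplex X D s1 s2 ⟶ YcomplexShift X D t1 t2 := ⟨fun p => Wmap X D p (p - 2), hcomm⟩
  let S : YcomplexShift X D t1 t2 ⟶ Ycomplex X D s1 s2 :=
    ⟨fun p => Smap X (p - 2) p, fun p q hpq =>
      Smap_comp_deltaY X D (by rw [← hpq]; ring) (by ring) (by ring)⟩
  have hWS : Homotopy (𝟙 _) (W ≫ S) :=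
    CochainComplex.homotopyOfFamily (Hmap X) (fun _ _ h => Hmap_eq_zero X h) fun n =>
      (congrArg (𝟙 (Yobj X n) - ·) (Wmap_comp_Smap X D (sub_add_cancel n 2))).trans
        (id_sub_Imap_eq X D (sub_add_cancel n 1) rfl)
  have hSW : Homotopy (𝟙 _) (S ≫ W) :=
    CochainComplex.homotopyOfFamily (fun p q => Hmap X (p - 2) (q - 2))
      (fun _ _ h => Hmap_eq_zero X (by omega)) fun n =>
      (congrArg (𝟙 (Yobj X (n - 2)) - ·) (Smap_comp_Wmap X D (sub_add_cancel n 2))).trans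
        (id_sub_Imap_eq X D (by ring) (by ring))
  exact (HomotopyEquiv.toHomologyIso ⟨W, S, hWS.symm, hSW.symm⟩ n).isIso_hom

/-- `W ∘ S = S ∘ W = I`, both composites are chain homotopic to the identity
of `Y`, hence `W` is a chain homotopy equivalence of degree `-2`; in particular the map induced
by `W` on cohomology, `H^n(Y) → H^{n-2}(Y)`, is an isomorphism for every `n`. -/
theorem W_comp_S_eq_I_and_homotopy_equiv (X : CochainComplex A ℤ)
    (D : ∀ n m : ℤ, X.X n ⟶ X.X m)
    (hD0 : ∀ n m : ℤ, m ≠ n - 2 → D n m = 0)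
    (hDcomm : ∀ n : ℤ, D n (n - 2) ≫ X.d (n - 2) (n - 1) = X.d n (n + 1) ≫ D (n + 1) (n - 1)) :
    (∀ n : ℤ, Smap X n (n + 2) ≫ Wmap X D (n + 2) n = Imap X D n) ∧
    (∀ n : ℤ, Wmap X D n (n - 2) ≫ Smap X (n - 2) n = Imap X D n) ∧
    (∃ h : ∀ p q : ℤ, Yobj X p ⟶ Yobj X q, ∀ n : ℤ,
      𝟙 (Yobj X n) - Smap X n (n + 2) ≫ Wmap X D (n + 2) n =
        h n (n - 1) ≫ deltaY X D (n - 1) n + deltaY X D n (n + 1) ≫ h (n + 1) n) ∧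
    (∃ h : ∀ p q : ℤ, Yobj X p ⟶ Yobj X q, ∀ n : ℤ,
      𝟙 (Yobj X n) - Wmap X D n (n - 2) ≫ Smap X (n - 2) n =
        h n (n - 1) ≫ deltaY X D (n - 1) n + deltaY X D n (n + 1) ≫ h (n + 1) n) ∧
    (∀ (s1 : ∀ n m : ℤ, ¬(ComplexShape.up ℤ).Rel n m → deltaY X D n m = 0)
      (s2 : ∀ n m k : ℤ, (ComplexShape.up ℤ).Rel n m → (ComplexShape.up ℤ).Rel m k →
        deltaY X D n m ≫ deltaY X D m k = 0)
      (t1 : ∀ n m : ℤ, ¬(ComplexShape.up ℤ).Rel n m → deltaY X D (n - 2) (m - 2) = 0)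
      (t2 : ∀ n m k : ℤ, (ComplexShape.up ℤ).Rel n m → (ComplexShape.up ℤ).Rel m k →
        deltaY X D (n - 2) (m - 2) ≫ deltaY X D (m - 2) (k - 2) = 0)
      (hcomm : ∀ n m : ℤ, (ComplexShape.up ℤ).Rel n m →
        Wmap X D n (n - 2) ≫ deltaY X D (n - 2) (m - 2) = deltaY X D n m ≫ Wmap X D m (m - 2))
      (n : ℤ),
      IsIso (HomologicalComplex.homologyMap
        (HomologicalComplex.Hom.mk (fun p => Wmap X D p (p - 2)) hcomm :
          Ycomplex X D s1 s2 ⟶ YcomplexShift X D t1 t2) n)) :=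
  W_comp_S_eq_I_and_homotopy_equiv_general X D
end

section
/- For every natural number r, the ℚ-linear map ψ_{ℚ,r} : (ℕ → ℚ) → (ℕ → ℚ) defined by ψ_{ℚ,r}(y)(i) = y(i) − (r+i+1)·y(i+1) is surjective, and evaluation at 0 restricts to a linear isomorphism from the kernel of ψ_{ℚ,r} onto ℚ (every solution of the homogeneous system y(i) = (r+i+1)·y(i+1) is uniquely determined by y(0), and every value of y(0) occurs). -/
/-- The `ℚ`-linear map `ψ_{ℚ,r}` on sequences, `ψ(y)(i) = y i - (r+i+1) • y (i+1)`. -/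
noncomputable def psiQ (r : ℕ) : (ℕ → ℚ) →ₗ[ℚ] (ℕ → ℚ) where
  toFun y := fun i => y i - ((r + i + 1 : ℕ) : ℚ) * y (i + 1)
  map_add' a b := by funext i; simp only [Pi.add_apply]; ring
  map_smul' c a := by funext i; simp only [Pi.smul_apply, smul_eq_mul, RingHom.id_apply]; ring

/-- `ψ_{ℚ,r}` is surjective and evaluation at `0` restricts to a linear
isomorphism from its kernel onto `ℚ`. -/
theorem psiQ_surjective_and_eval_zero_bijective (r : ℕ) :
    Function.Surjective (psiQ r) ∧
      Function.Bijective
        ((LinearMap.proj 0 : (ℕ → ℚ) →ₗ[ℚ] ℚ).comp (LinearMap.ker (psiQ r)).subtype) := by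
  have hne : ∀ i : ℕ, ((r + i + 1 : ℕ) : ℚ) ≠ 0 := by
    intro i
    exact_mod_cast Nat.succ_ne_zero (r + i)
  have hker : ∀ y : ℕ → ℚ, y ∈ LinearMap.ker (psiQ r) →
      ∀ i, y (i + 1) = y i / ((r + i + 1 : ℕ) : ℚ) := by
    intro y hy i
    have h := congrFun (LinearMap.mem_ker.mp hy) i
    simp only [psiQ, LinearMap.coe_mk, AddHom.coe_mk, Pi.zero_apply] at h
    rw [sub_eq_zero] at h
    rw [h, mul_div_cancel_left₀ _ (hne i)]
  constructor
  · intro g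
    set y : ℕ → ℚ := fun n =>
      Nat.rec (0 : ℚ) (fun i yi => (yi - g i) / ((r + i + 1 : ℕ) : ℚ)) n with hy
    refine ⟨y, funext fun i => ?_⟩
    show y i - ((r + i + 1 : ℕ) : ℚ) * y (i + 1) = g i
    have h1 : y (i + 1) = (y i - g i) / ((r + i + 1 : ℕ) : ℚ) := rfl
    rw [h1, mul_div_cancel₀ _ (hne i)]
    ring
  · constructor
    · rintro ⟨y, hy⟩ ⟨z, hz⟩ h
      simp only [LinearMap.comp_apply, Submodule.coe_subtype, LinearMap.proj_apply] at h
      ext i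
      show y i = z i
      induction i with
      | zero => exact h
      | succ n ih => rw [hker y hy n, hker z hz n, ih]
    · intro q
      set y : ℕ → ℚ := fun n => q / ∏ j ∈ Finset.range n, ((r + j + 1 : ℕ) : ℚ) with hy
      have hmem : y ∈ LinearMap.ker (psiQ r) := by
        rw [LinearMap.mem_ker]
        funext i
        show y i - ((r + i + 1 : ℕ) : ℚ) * y (i + 1) = 0
        have h1 : y (i + 1) = q / ∏ j ∈ Finset.range (i + 1), ((r + j + 1 : ℕ) : ℚ) := rfl
        have h0 : y i = q / ∏ j ∈ Finset.range i, ((r + j + 1 : ℕ) : ℚ) := rfl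
        rw [h0, h1, Finset.prod_range_succ]
        have hp : (∏ j ∈ Finset.range i, ((r + j + 1 : ℕ) : ℚ)) ≠ 0 :=
          Finset.prod_ne_zero_iff.mpr fun j _ => hne j
        push_cast
        field_simp
        ring
      refine ⟨⟨y, hmem⟩, ?_⟩
      simp only [LinearMap.comp_apply, Submodule.coe_subtype, LinearMap.proj_apply]
      show q / ∏ j ∈ Finset.range 0, ((r + j + 1 : ℕ) : ℚ) = q
      simp
end

section
/- For every natural number n ≥ 1 and every natural number r, the group homomorphism ψ_{ℤ/nℤ,r} : (ℕ → ℤ/nℤ) → (ℕ → ℤ/nℤ) defined by ψ_{ℤ/nℤ,r}(y)(i) = y(i) − (r+i+1)·y(i+1) is bijective. -/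
/-- Distance from `i` to the next index `j ≥ i` with `n ∣ r+j+1`. -/
def psiDN (n r i : ℕ) : ℕ := (n - (r + i + 1) % n) % n

lemma dvd_add_psiDN (n r : ℕ) (hn : 1 ≤ n) (i : ℕ) :
    n ∣ r + i + 1 + psiDN n r i := by
  unfold psiDN
  set a := r + i + 1 with ha
  have hs : a % n < n := Nat.mod_lt _ (by omega)
  rcases eq_or_ne (a % n) 0 with h0 | h0
  · rw [h0, Nat.sub_zero, Nat.mod_self, Nat.add_zero]
    exact Nat.dvd_of_mod_eq_zero h0
  · rw [Nat.mod_eq_of_lt (by omega : n - a % n < n)]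
    have hq : n * (a / n) + a % n = a := Nat.div_add_mod a n
    refine ⟨a / n + 1, ?_⟩
    have : n * (a / n + 1) = n * (a / n) + n := by ring
    omega

lemma psiDN_eq_zero_of_dvd (n r : ℕ) (hn : 1 ≤ n) (i : ℕ) (h : n ∣ r + i + 1) :
    psiDN n r i = 0 := by
  have h0 : (r + i + 1) % n = 0 := Nat.eq_zero_of_dvd_of_lt (Nat.dvd_mod_iff dvd_rfl |>.mpr h) (Nat.mod_lt _ (by omega))
  unfold psiDN
  rw [h0, Nat.sub_zero, Nat.mod_self]

lemma dvd_of_psiDN_eq_zero (n r : ℕ) (hn : 1 ≤ n) (i : ℕ) (h : psiDN n r i = 0) :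
    n ∣ r + i + 1 := by
  unfold psiDN at h
  set a := r + i + 1 with ha
  have hs : a % n < n := Nat.mod_lt _ (by omega)
  rcases eq_or_ne (a % n) 0 with h0 | h0
  · exact Nat.dvd_of_mod_eq_zero h0
  · rw [Nat.mod_eq_of_lt (by omega : n - a % n < n)] at h
    omega

lemma psiDN_step (n r : ℕ) (hn : 1 ≤ n) (i : ℕ) (h : ¬ n ∣ r + i + 1) :
    psiDN n r i = psiDN n r (i + 1) + 1 := by
  unfold psiDN
  have hb : r + (i + 1) + 1 = (r + i + 1) + 1 := by omega
  rw [hb]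
  set a := r + i + 1 with ha
  have hs : a % n < n := Nat.mod_lt _ (by omega)
  have h0 : a % n ≠ 0 := fun hc => h (Nat.dvd_of_mod_eq_zero hc)
  have hn2 : 2 ≤ n := by omega
  have h1 : (a + 1) % n = (a % n + 1) % n := by
    rw [Nat.add_mod a 1 n, Nat.mod_eq_of_lt (show 1 < n by omega)]
  rw [Nat.mod_eq_of_lt (by omega : n - a % n < n), h1]
  rcases eq_or_ne (a % n + 1) n with he | he
  · rw [he, Nat.mod_self, Nat.sub_zero, Nat.mod_self]
    omega
  · rw [Nat.mod_eq_of_lt (by omega : a % n + 1 < n),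
      Nat.mod_eq_of_lt (by omega : n - (a % n + 1) < n)]
    omega

/-- The additive endomorphism `ψ_{F,r}` of the group of sequences in an abelian group `F`,
`ψ(y)(i) = y i - (r+i+1) • y (i+1)`. -/
def psiSeq (F : Type*) [AddCommGroup F] (r : ℕ) : (ℕ → F) →+ (ℕ → F) :=
  AddMonoidHom.mk' (fun y => fun i => y i - (r + i + 1) • y (i + 1))
    (by
      intro a b
      funext i
      simp only [Pi.add_apply, smul_add]
      abel)

/-- For `n ≥ 1`, the homomorphism `ψ_{ℤ/nℤ,r}` is bijective. -/
theorem psiSeq_zmod_bijective (n : ℕ) (hn : 1 ≤ n) (r : ℕ) :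
    Function.Bijective (psiSeq (ZMod n) r) := by
  haveI : NeZero n := ⟨by omega⟩
  constructor
  · rw [injective_iff_map_eq_zero]
    intro y hy
    have h : ∀ i, y i = ((r + i + 1 : ℕ) : ZMod n) * y (i + 1) := by
      intro i
      have h1 := congrFun hy i
      simp only [psiSeq, AddMonoidHom.mk'_apply, Pi.zero_apply, nsmul_eq_mul] at h1
      rw [sub_eq_zero] at h1
      exact_mod_cast h1
    have claim : ∀ d i, psiDN n r i = d → y i = 0 := by
      intro d
      induction d with
      | zero =>
        intro i hd
        have hdvd : n ∣ r + i + 1 := dvd_of_psiDN_eq_zero n r hn i hd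
        have hc : ((r + i + 1 : ℕ) : ZMod n) = 0 :=
          (ZMod.natCast_eq_zero_iff _ _).mpr hdvd
        rw [h i, hc, zero_mul]
      | succ d ih =>
        intro i hd
        have hnd : ¬ n ∣ r + i + 1 := by
          intro hdvd
          rw [psiDN_eq_zero_of_dvd n r hn i hdvd] at hd
          omega
        have hstep := psiDN_step n r hn i hnd
        have : psiDN n r (i + 1) = d := by omega
        rw [h i, ih (i + 1) this, mul_zero]
    funext i
    exact claim (psiDN n r i) i rfl
  · intro z
    refine ⟨fun i => ∑ k ∈ Finset.Icc i (i + psiDN n r i),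
      (∏ m ∈ Finset.Ico i k, ((r + m + 1 : ℕ) : ZMod n)) * z k, ?_⟩
    funext i
    simp only [psiSeq, AddMonoidHom.mk'_apply, nsmul_eq_mul]
    by_cases hdvd : n ∣ r + i + 1
    · have hd0 : psiDN n r i = 0 := psiDN_eq_zero_of_dvd n r hn i hdvd
      have hc : ((r + i + 1 : ℕ) : ZMod n) = 0 :=
        (ZMod.natCast_eq_zero_iff _ _).mpr hdvd
      rw [hd0]
      push_cast [hc]
      simp
    · have hstep := psiDN_step n r hn i hdvd
      have hJ : i + psiDN n r i = (i + 1) + psiDN n r (i + 1) := by omega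
      have hsplit : Finset.Icc i (i + psiDN n r i)
          = insert i (Finset.Icc (i + 1) (i + psiDN n r i)) := by
        ext k
        simp only [Finset.mem_Icc, Finset.mem_insert]
        omega
      rw [hsplit, Finset.sum_insert (by simp)]
      rw [Finset.Ico_self, Finset.prod_empty, one_mul]
      have hcongr : ∑ k ∈ Finset.Icc (i + 1) (i + psiDN n r i),
          (∏ m ∈ Finset.Ico i k, ((r + m + 1 : ℕ) : ZMod n)) * z k
          = ((r + i + 1 : ℕ) : ZMod n) * ∑ k ∈ Finset.Icc (i + 1) (i + psiDN n r i),
            (∏ m ∈ Finset.Ico (i + 1) k, ((r + m + 1 : ℕ) : ZMod n)) * z k := by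
        rw [Finset.mul_sum]
        refine Finset.sum_congr rfl fun k hk => ?_
        rw [Finset.mem_Icc] at hk
        rw [Finset.prod_eq_prod_Ico_succ_bot (by omega : i < k), mul_assoc]
      rw [hcongr, hJ]
      ring
end
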